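/- Assume the Riemann Hypothesis. Then for every integer r ≥ 2, the error term Δ_r(x) = Σ_{n≤x} G_r(n) − x^r/r! − H_r(x) satisfies Δ_r(x) = Ω(x^{r−1}); that is, limsup_{x→∞} |Δ_r(x)|/x^{r−1} > 0. -/

import Mathlib

/-!
Under RH every term of the zero sum has modulus `x ^ (r - 1/2) * w ρ` with `w ρ` independent of
`x`, so `H_r(x) = O(x ^ (r - 1/2))` and `H_r` is continuous on `(0, ∞)`. Suppose
`|Δ_r(x)| ≤ ε x ^ (r - 1)` eventually, with `ε = 1 / (4 r!)`. Since `x ^ r / r!` and `H_r` are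
continuous, `Δ_r` jumps by exactly `G_r(n)` at each integer `n`, so `G_r(n) ≤ 2 ε n ^ (r - 1)` and
`∑_{n ≤ N} G_r(n) ≤ O(1) + N ^ r / (2 r!)`. On the other hand, evaluating `Δ_r` at integers gives
`∑_{n ≤ N} G_r(n) ≥ N ^ r / r! - O(N ^ (r - 1/2))`, a contradiction for large `N`.
-/

open Complex Filter

/-- `G r n = ∑_{k₁+⋯+k_r = n, kᵢ ≥ 1} Λ(k₁)⋯Λ(k_r)` where `Λ` is the von Mangoldt function. -/
noncomputable def G (r n : ℕ) : ℝ :=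
  ∑ k ∈ (Fintype.piFinset fun _ : Fin r => Finset.Icc 1 n).filter
      (fun k => ∑ i, k i = n),
    ∏ i, ArithmeticFunction.vonMangoldt (k i)

open Classical in
/-- The multiplicity of a point as a zero of the Riemann zeta function. -/
noncomputable def zetaMult (ρ : ℂ) : ℕ :=
  if h : AnalyticAt ℂ riemannZeta ρ then (analyticOrderAt riemannZeta ρ).toNat else 0

/-- `Hr r x = -r ∑_ρ x^(r-1+ρ) / (ρ(1+ρ)⋯(r-1+ρ))`, summed over the nontrivial zeros
of `ζ` counted with multiplicity. -/
noncomputable def Hr (r : ℕ) (x : ℝ) : ℂ :=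
  -(r : ℂ) * ∑' ρ : {ρ : ℂ // riemannZeta ρ = 0 ∧ 0 < ρ.re ∧ ρ.re < 1},
    (zetaMult ρ : ℂ) * (x : ℂ) ^ ((r : ℂ) - 1 + (ρ : ℂ)) /
      ∏ j ∈ Finset.range r, ((j : ℂ) + (ρ : ℂ))

/-- The error term `Δ_r(x) = ∑_{n ≤ x} G_r(n) - x^r/r! - H_r(x)`. -/
noncomputable def Delta (r : ℕ) (x : ℝ) : ℂ :=
  (∑ n ∈ Finset.range (⌊x⌋₊ + 1), (G r n : ℂ)) - (x : ℂ) ^ r / (r.factorial : ℂ) - Hr r x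

open Topology Set Asymptotics
open scoped Nat

abbrev NontrivialZero : Type := {ρ : ℂ // riemannZeta ρ = 0 ∧ 0 < ρ.re ∧ ρ.re < 1}

noncomputable def zeroTerm (r : ℕ) (x : ℝ) (ρ : NontrivialZero) : ℂ :=
  (zetaMult ρ : ℂ) * (x : ℂ) ^ ((r : ℂ) - 1 + (ρ : ℂ)) /
    ∏ j ∈ Finset.range r, ((j : ℂ) + (ρ : ℂ))

noncomputable def zeroWeight (r : ℕ) (ρ : NontrivialZero) : ℝ :=
  (zetaMult ρ : ℝ) / ∏ j ∈ Finset.range r, ‖(j : ℂ) + (ρ : ℂ)‖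

noncomputable def summatoryG (r N : ℕ) : ℝ := ∑ n ∈ Finset.range (N + 1), G r n

lemma Complex.norm_tsum_le_tsum_norm {ι : Type*} (f : ι → ℂ) : ‖∑' i, f i‖ ≤ ∑' i, ‖f i‖ := by
  by_cases hf : Summable fun i => ‖f i‖
  · exact _root_.norm_tsum_le_tsum_norm hf
  · rw [tsum_eq_zero_of_not_summable hf,
      tsum_eq_zero_of_not_summable (mt summable_norm_iff.mpr hf), norm_zero]

lemma continuousOn_tsum_of_norm_eq {X ι : Type*} [TopologicalSpace X] {s : Set X}
    (hs : IsOpen s) {f : ι → X → ℂ} {v : X → ℝ} {w : ι → ℝ}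
    (hf : ∀ i, ContinuousOn (f i) s) (hv : ContinuousOn v s) (hv0 : ∀ x ∈ s, 0 < v x)
    (hnorm : ∀ i, ∀ x ∈ s, ‖f i x‖ = v x * w i) :
    ContinuousOn (fun x => ∑' i, f i x) s := by
  by_cases hw : Summable w
  · intro x hx
    have hw0 (i : ι) : 0 ≤ w i :=
      nonneg_of_mul_nonneg_right (hnorm i x hx ▸ norm_nonneg _) (hv0 x hx)
    -- near `x` the weights `v` stay below `v x + 1`, which gives a summable majorant
    let U := s ∩ v ⁻¹' Iio (v x + 1)
    have hU : IsOpen U := hv.isOpen_inter_preimage hs isOpen_Iio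
    have hcont : ContinuousOn (fun x => ∑' i, f i x) U :=
      continuousOn_tsum (fun i => (hf i).mono inter_subset_left) (hw.mul_left (v x + 1))
        fun i y hy => (hnorm i y hy.1).trans_le (mul_le_mul_of_nonneg_right hy.2.le (hw0 i))
    exact (hcont.continuousAt (hU.mem_nhds ⟨hx, lt_add_one (v x)⟩)).continuousWithinAt
  · -- every sum is then the junk value `0`
    refine continuousOn_const (c := (0 : ℂ)).congr fun x hx => tsum_eq_zero_of_not_summable ?_
    intro hsum
    refine hw ((summable_mul_left_iff (hv0 x hx).ne').mp ?_)
    simpa only [hnorm _ x hx] using hsum.norm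

lemma isLittleO_rpow_rpow_atTop {a b : ℝ} (hab : a < b) :
    (fun x : ℝ => x ^ a) =o[atTop] fun x => x ^ b := by
  refine (isLittleO_iff_tendsto' ?_).mpr ?_
  · filter_upwards [eventually_gt_atTop 0] with x hx h
    exact absurd h (Real.rpow_pos_of_pos hx b).ne'
  · have h := tendsto_rpow_neg_atTop (sub_pos.mpr hab)
    refine h.congr' ?_
    filter_upwards [eventually_gt_atTop 0] with x hx
    rw [← Real.rpow_sub hx, neg_sub]

lemma eventually_le_mul_of_limsup_nonpos {α : Type*} {l : Filter α} {f g : α → ℝ}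
    (hg : ∀ᶠ x in l, 0 < g x) (h : limsup (fun x => ((f x / g x : ℝ) : EReal)) l ≤ 0)
    {ε : ℝ} (hε : 0 < ε) : ∀ᶠ x in l, f x ≤ ε * g x := by
  filter_upwards [eventually_lt_of_limsup_lt (h.trans_lt (EReal.coe_pos.mpr hε)), hg]
    with x hx hgx
  rw [EReal.coe_lt_coe_iff, div_lt_iff₀ hgx] at hx
  exact hx.le

lemma eventually_lt_mul_of_isLittleO {α : Type*} {l : Filter α} {f g : α → ℝ}
    (h : f =o[l] g) (hg : ∀ᶠ x in l, 0 < g x) {c : ℝ} (hc : 0 < c) :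
    ∀ᶠ x in l, f x < c * g x := by
  filter_upwards [h.bound (half_pos hc), hg] with x hx hgx
  rw [Real.norm_eq_abs, Real.norm_eq_abs, abs_of_pos hgx] at hx
  nlinarith [le_abs_self (f x)]

lemma G_nonneg (r n : ℕ) : 0 ≤ G r n :=
  Finset.sum_nonneg fun _ _ => Finset.prod_nonneg fun _ _ =>
    ArithmeticFunction.vonMangoldt_nonneg

lemma RiemannHypothesis.re_eq_half (hRH : RiemannHypothesis) (ρ : NontrivialZero) :
    (ρ : ℂ).re = 1 / 2 := by
  obtain ⟨ρ, hζ, hpos, hlt⟩ := ρ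
  refine hRH ρ hζ ?_ ?_
  · rintro ⟨n, rfl⟩
    have : (-2 * ((n : ℂ) + 1)).re = -2 * ((n : ℝ) + 1) := by simp
    rw [this] at hpos
    linarith [n.cast_nonneg (α := ℝ)]
  · rintro rfl
    simp at hlt

lemma Hr_eq_tsum (r : ℕ) (x : ℝ) : Hr r x = -(r : ℂ) * ∑' ρ, zeroTerm r x ρ := rfl

lemma norm_zeroTerm (hRH : RiemannHypothesis) (r : ℕ) {x : ℝ} (hx : 0 < x)
    (ρ : NontrivialZero) : ‖zeroTerm r x ρ‖ = x ^ ((r : ℝ) - 1 / 2) * zeroWeight r ρ := by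
  have hre : ((r : ℂ) - 1 + (ρ : ℂ)).re = (r : ℝ) - 1 / 2 := by
    simp only [add_re, sub_re, natCast_re, one_re, hRH.re_eq_half ρ]
    ring
  rw [zeroTerm, zeroWeight, norm_div, norm_mul, norm_natCast,
    norm_cpow_eq_rpow_re_of_pos hx, hre, norm_prod]
  ring

lemma norm_Hr_le (hRH : RiemannHypothesis) (r : ℕ) {x : ℝ} (hx : 0 < x) :
    ‖Hr r x‖ ≤ r * (∑' ρ, zeroWeight r ρ) * x ^ ((r : ℝ) - 1 / 2) :=
  calc ‖Hr r x‖ = r * ‖∑' ρ, zeroTerm r x ρ‖ := by simp [Hr_eq_tsum]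
    _ ≤ r * ∑' ρ, ‖zeroTerm r x ρ‖ := by gcongr; exact Complex.norm_tsum_le_tsum_norm _
    _ = r * (∑' ρ, zeroWeight r ρ) * x ^ ((r : ℝ) - 1 / 2) := by
      simp only [norm_zeroTerm hRH r hx, tsum_mul_left]
      ring

lemma continuousOn_Hr (hRH : RiemannHypothesis) (r : ℕ) : ContinuousOn (Hr r) (Ioi 0) := by
  have hterm (ρ : NontrivialZero) : ContinuousOn (fun x => zeroTerm r x ρ) (Ioi 0) := by
    intro x hx
    refine ((continuousAt_const.mul ?_).div_const _).continuousWithinAt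
    exact (continuousAt_cpow_const (ofReal_mem_slitPlane.mpr hx)).comp
      continuous_ofReal.continuousAt
  have hrpow : ContinuousOn (fun x : ℝ => x ^ ((r : ℝ) - 1 / 2)) (Ioi 0) :=
    fun x hx => (Real.continuousAt_rpow_const _ _ (Or.inl (ne_of_gt hx))).continuousWithinAt
  exact continuousOn_const.mul <| continuousOn_tsum_of_norm_eq isOpen_Ioi hterm hrpow
    (fun x hx => Real.rpow_pos_of_pos hx _) fun ρ x hx => norm_zeroTerm hRH r hx ρ

lemma Delta_eq (r : ℕ) (x : ℝ) :
    Delta r x = (summatoryG r ⌊x⌋₊ : ℂ) - (x : ℂ) ^ r / (r ! : ℂ) - Hr r x := by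
  simp [Delta, summatoryG]

lemma summatoryG_succ (r N : ℕ) : summatoryG r (N + 1) = summatoryG r N + G r (N + 1) :=
  Finset.sum_range_succ _ _

lemma abs_summatoryG_sub_le (r N : ℕ) :
    |summatoryG r N - (N : ℝ) ^ r / r !| ≤ ‖Delta r N‖ + ‖Hr r N‖ := by
  have h : summatoryG r N - (N : ℝ) ^ r / r ! = (Delta r N + Hr r N).re := by
    simp [Delta_eq, ← ofReal_natCast, ← ofReal_pow, ← ofReal_div]
  rw [h]
  exact (abs_re_le_norm _).trans (norm_add_le _ _)

lemma tendsto_Delta_nhdsLT {r n : ℕ} (hn : 0 < n)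
    (hH : ContinuousWithinAt (Hr r) (Iio n) n) :
    Tendsto (Delta r) (𝓝[<] (n : ℝ)) (𝓝 (Delta r n - G r n)) := by
  obtain ⟨m, rfl⟩ : ∃ m, n = m + 1 := ⟨n - 1, by omega⟩
  have hjump : Delta r (m + 1 : ℕ) - G r (m + 1) =
      (summatoryG r m : ℂ) - (((m + 1 : ℕ) : ℝ) : ℂ) ^ r / (r ! : ℂ) - Hr r (m + 1 : ℕ) := by
    rw [Delta_eq, Nat.floor_natCast, summatoryG_succ]
    push_cast
    ring
  rw [hjump]
  refine Tendsto.congr' (f₁ := fun x : ℝ => (summatoryG r m : ℂ) - (x : ℂ) ^ r / (r ! : ℂ) - Hr r x)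
    ?_ ((tendsto_const_nhds.sub ?_).sub hH)
  · filter_upwards [Ioo_mem_nhdsLT (show ((m + 1 : ℕ) : ℝ) - 1 < (m + 1 : ℕ) by linarith)]
      with x hx
    have hfloor : ⌊x⌋₊ = m := by
      push_cast at hx
      rw [Nat.floor_eq_iff (by linarith [hx.1, m.cast_nonneg (α := ℝ)])]
      constructor <;> linarith [hx.1, hx.2]
    rw [Delta_eq, hfloor]
  · exact ((continuous_ofReal.pow r).div_const _).continuousWithinAt

lemma G_le_of_norm_Delta_le {r n : ℕ} (hn : 0 < n)
    (hH : ContinuousWithinAt (Hr r) (Iio n) n) {B : ℝ}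
    (hB : ∀ x ∈ Ioc ((n : ℝ) - 1) n, ‖Delta r x‖ ≤ B) : G r n ≤ 2 * B := by
  have hleft : ‖Delta r n - G r n‖ ≤ B := by
    refine le_of_tendsto (tendsto_Delta_nhdsLT hn hH).norm ?_
    filter_upwards [Ioo_mem_nhdsLT (sub_one_lt (n : ℝ))] with x hx
    exact hB x (Ioo_subset_Ioc_self hx)
  have hright := hB n ⟨sub_one_lt _, le_rfl⟩
  calc G r n = ‖((G r n : ℝ) : ℂ)‖ := by rw [norm_real, Real.norm_of_nonneg (G_nonneg r n)]
    _ = ‖Delta r n - (Delta r n - G r n)‖ := by rw [sub_sub_cancel]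
    _ ≤ 2 * B := by linarith [norm_sub_le (Delta r n) (Delta r n - G r n)]

lemma summatoryG_le_of_G_le {r N₀ N : ℕ} (hN : N₀ ≤ N) {b : ℝ}
    (hb : ∀ n ∈ Finset.Ioc N₀ N, G r n ≤ b) :
    summatoryG r N ≤ summatoryG r N₀ + (N - N₀ : ℕ) * b := by
  have hsplit : summatoryG r N = summatoryG r N₀ + ∑ n ∈ Finset.Ioc N₀ N, G r n := by
    simp only [summatoryG, Finset.range_eq_Ico]
    rw [← Finset.sum_Ico_consecutive _ (Nat.zero_le _) (by omega : N₀ + 1 ≤ N + 1),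
      Finset.Ico_add_one_add_one_eq_Ioc]
  rw [hsplit, ← Nat.card_Ioc, ← nsmul_eq_mul]
  exact add_le_add_right (Finset.sum_le_card_nsmul _ _ _ hb) _

lemma eventually_G_le (hRH : RiemannHypothesis) {r k : ℕ} {ε : ℝ} (hε : 0 ≤ ε)
    (hΔ : ∀ᶠ x in atTop, ‖Delta r x‖ ≤ ε * x ^ k) :
    ∀ᶠ n : ℕ in atTop, G r n ≤ 2 * ε * n ^ k := by
  obtain ⟨X, hX⟩ := eventually_atTop.mp hΔ
  filter_upwards [eventually_ge_atTop (⌈X⌉₊ + 1)] with n hn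
  have hn' : (⌈X⌉₊ : ℝ) + 1 ≤ n := by exact_mod_cast hn
  have hH : ContinuousWithinAt (Hr r) (Iio n) n :=
    ((continuousOn_Hr hRH r).continuousAt (Ioi_mem_nhds (by linarith))).continuousWithinAt
  have := G_le_of_norm_Delta_le (by omega) hH (B := ε * n ^ k) fun x hx =>
    (hX x (by linarith [hx.1, Nat.le_ceil X])).trans (by gcongr; linarith [hx.1]; exact hx.2)
  linarith

lemma exists_summatoryG_le (hRH : RiemannHypothesis) {r k : ℕ} {ε : ℝ} (hε : 0 ≤ ε)
    (hΔ : ∀ᶠ x in atTop, ‖Delta r x‖ ≤ ε * x ^ k) :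
    ∃ A, ∀ᶠ N : ℕ in atTop, summatoryG r N ≤ A + 2 * ε * N ^ (k + 1) := by
  obtain ⟨N₀, hN₀⟩ := eventually_atTop.mp (eventually_G_le hRH hε hΔ)
  refine ⟨summatoryG r N₀, ?_⟩
  filter_upwards [eventually_ge_atTop N₀] with N hN
  have hsum := summatoryG_le_of_G_le hN (b := 2 * ε * N ^ k) fun n hn => by
    have hn := Finset.mem_Ioc.mp hn
    exact (hN₀ n (by omega)).trans (by gcongr; exact_mod_cast hn.2)
  have hcard : ((N - N₀ : ℕ) : ℝ) ≤ N := by exact_mod_cast Nat.sub_le N N₀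
  calc summatoryG r N ≤ summatoryG r N₀ + (N - N₀ : ℕ) * (2 * ε * N ^ k) := hsum
    _ ≤ summatoryG r N₀ + N * (2 * ε * N ^ k) := by gcongr
    _ = summatoryG r N₀ + 2 * ε * N ^ (k + 1) := by ring

lemma isLittleO_const_add_pow_add_rpow (A ε C : ℝ) (k : ℕ) :
    (fun x : ℝ => A + ε * x ^ k + C * x ^ ((k + 1 : ℕ) - 1 / 2 : ℝ)) =o[atTop]
      fun x => x ^ (k + 1) := by
  have hconst : (fun _ : ℝ => A) =o[atTop] fun x : ℝ => x ^ (k + 1) :=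
    isLittleO_const_left.mpr <| Or.inr <|
      tendsto_norm_atTop_atTop.comp (tendsto_pow_atTop k.succ_ne_zero)
  have hpow := (isLittleO_pow_pow_atTop_of_lt k.lt_succ_self (𝕜 := ℝ)).const_mul_left ε
  have hrpow := ((isLittleO_rpow_rpow_atTop
    (show ((k + 1 : ℕ) - 1 / 2 : ℝ) < (k + 1 : ℕ) by linarith)).const_mul_left C).congr_right
    fun x => Real.rpow_natCast x (k + 1)
  exact (hconst.add hpow).add hrpow

/-- Under RH, `Δ_r(x) = Ω(x^(r-1))`, i.e. `limsup_{x → ∞} |Δ_r(x)|/x^(r-1) > 0`. -/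
theorem stmt_7 (hRH : RiemannHypothesis) (r : ℕ) (hr : 2 ≤ r) :
    0 < Filter.limsup
      (fun x : ℝ => ((‖Delta r x‖ / x ^ (r - 1) : ℝ) : EReal)) atTop := by
  by_contra! hle
  obtain ⟨k, rfl⟩ : ∃ k, r = k + 1 := ⟨r - 1, by omega⟩
  rw [Nat.add_sub_cancel] at hle
  set K : ℝ := ((k + 1)! : ℝ)
  have hK : 0 < K := by positivity
  set ε : ℝ := 1 / (4 * K)
  have hΔ : ∀ᶠ x : ℝ in atTop, ‖Delta (k + 1) x‖ ≤ ε * x ^ k :=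
    eventually_le_mul_of_limsup_nonpos ((eventually_gt_atTop 0).mono fun x hx => by positivity)
      hle (by positivity)
  obtain ⟨A, hA⟩ := exists_summatoryG_le hRH (by positivity) hΔ
  set C : ℝ := (k + 1 : ℕ) * ∑' ρ, zeroWeight (k + 1) ρ
  have hsandwich : ∀ᶠ N : ℕ in atTop, 1 / (2 * K) * (N : ℝ) ^ (k + 1) ≤
      A + ε * N ^ k + C * N ^ ((k + 1 : ℕ) - 1 / 2 : ℝ) := by
    filter_upwards [hA, tendsto_natCast_atTop_atTop.eventually hΔ, eventually_gt_atTop 0]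
      with N hup hΔN hN
    have hlow := neg_abs_le (summatoryG (k + 1) N - (N : ℝ) ^ (k + 1) / (k + 1)!)
    have hH := norm_Hr_le hRH (k + 1) (Nat.cast_pos.mpr hN)
    have hsplit : (N : ℝ) ^ (k + 1) / K = 2 * ε * N ^ (k + 1) + 1 / (2 * K) * N ^ (k + 1) := by
      simp only [ε]
      field_simp
      ring
    linarith [abs_summatoryG_sub_le (k + 1) N]
  have herr := (isLittleO_const_add_pow_add_rpow A ε C k).comp_tendsto tendsto_natCast_atTop_atTop
  obtain ⟨N, hle, hlt⟩ := (hsandwich.and (eventually_lt_mul_of_isLittleO herr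
    ((eventually_gt_atTop 0).mono fun N hN => pow_pos (Nat.cast_pos.mpr hN) _) (c := 1 / (2 * K))
    (by positivity))).exists
  exact hle.not_gt hlt
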